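/- arXiv:1308.3314 — 2 statements merged into one kernel-verified Lean document; each statement's English description precedes it below -/
import Mathlib

section
/- Let d, k ≥ 1, let K ⊆ ℝ^d be compact, and let g : ℝ^d → ℝ be bounded and measurable. Define W_g(c) = ∫_K min_{j=1,…,k} ‖x − c_j‖² g(x) dx for c = (c_1,…,c_k) ∈ (ℝ^d)^k. Suppose c has pairwise distinct centers and for every j ∈ {1,…,k} and every coordinate ℓ ∈ {1,…,d}: c_{ℓ,j} · ∫_{V_j(c) ∩ K} g(x) dx = ∫_{V_j(c) ∩ K} x_ℓ g(x) dx, where c_{ℓ,j} is the ℓ-th coordinate of c_j. Then every directional derivative of W_g at c is zero. -/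
/-!
Off the perpendicular bisectors of pairs of centres, a Lebesgue-null set, every point `x` has a
unique nearest centre `c j`; for small `h` the perturbed minimum is then `‖x - (c j + h • c' j)‖²`,
with derivative `-2 ⟪x - c j, c' j⟫` at `0`. The minimum is Lipschitz in `h` uniformly on the
compact `K`, so differentiation passes under the integral, and the directional derivative of `W`
is `-2 ∑ j ∫_{V_j ∩ K} ⟪x - c j, c' j⟫ g x dx`, each term of which vanishes by the centroid
conditions.
-/

open MeasureTheory

/-- The Voronoi cell of index `j` for the codebook `c`. -/
def voronoiCell {d k : ℕ} (c : Fin k → EuclideanSpace ℝ (Fin d)) (j : Fin k) :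
    Set (EuclideanSpace ℝ (Fin d)) :=
  {x | ∀ u : Fin k, ‖x - c j‖ ≤ ‖x - c u‖}

open Filter Topology Set
open scoped RealInnerProductSpace

section FiniteInf

variable {ι X : Type*} [Fintype ι]

lemma Continuous.ciInf_apply [TopologicalSpace X] [Nonempty ι] {f : ι → X → ℝ}
    (hf : ∀ i, Continuous (f i)) : Continuous fun x => ⨅ i, f i x := by
  simpa only [← Finset.inf'_univ_eq_ciInf] using
    Continuous.finset_inf'_apply Finset.univ_nonempty fun i _ => hf i

lemma abs_ciInf_sub_ciInf_le [Nonempty ι] {p q : ι → ℝ} {B : ℝ} (h : ∀ i, |p i - q i| ≤ B) :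
    |(⨅ i, p i) - ⨅ i, q i| ≤ B := by
  have key : ∀ p q : ι → ℝ, (∀ i, |p i - q i| ≤ B) → (⨅ i, p i) - B ≤ ⨅ i, q i :=
    fun p q h => le_ciInf fun i => by
      linarith [ciInf_le (Set.finite_range p).bddBelow i, (abs_le.1 (h i)).2]
  rw [abs_le]
  constructor
  · linarith [key q p fun i => (abs_sub_comm (q i) (p i)).trans_le (h i)]
  · linarith [key p q h]

lemma eventually_ciInf_eq_of_forall_lt [TopologicalSpace X] {f : ι → X → ℝ} {x₀ : X} {j : ι}
    (hf : ∀ i, ContinuousAt (f i) x₀) (hlt : ∀ i ≠ j, f j x₀ < f i x₀) :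
    ∀ᶠ x in 𝓝 x₀, ⨅ i, f i x = f j x := by
  have hle : ∀ᶠ x in 𝓝 x₀, ∀ i, f j x ≤ f i x := by
    refine eventually_all.2 fun i => ?_
    rcases eq_or_ne i j with rfl | hij
    · exact Eventually.of_forall fun _ => le_rfl
    · exact ((hf j).eventually_lt (hf i) (hlt i hij)).mono fun _ => le_of_lt
  have : Nonempty ι := ⟨j⟩
  filter_upwards [hle] with x hx
  exact le_antisymm (ciInf_le (Set.finite_range _).bddBelow j) (le_ciInf hx)

end FiniteInf

section MovingCenters

variable {E ι : Type*} [NormedAddCommGroup E] [InnerProductSpace ℝ E] [Fintype ι]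

lemma abs_norm_sub_smul_sq_sub_le (y v : E) {s t : ℝ} (hs : |s| ≤ 1) (ht : |t| ≤ 1) :
    |‖y - s • v‖ ^ 2 - ‖y - t • v‖ ^ 2| ≤ 2 * (‖y‖ + ‖v‖) * ‖v‖ * |s - t| := by
  have hexpand : ‖y - s • v‖ ^ 2 - ‖y - t • v‖ ^ 2
      = (s - t) * ((s + t) * ‖v‖ ^ 2 - 2 * ⟪y, v⟫) := by
    simp only [norm_sub_sq_real, real_inner_smul_right, norm_smul, mul_pow, Real.norm_eq_abs,
      sq_abs]
    ring
  have hst : |s + t| ≤ 2 := (abs_add_le s t).trans (by linarith)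
  rw [hexpand, abs_mul, mul_comm]
  gcongr
  calc |(s + t) * ‖v‖ ^ 2 - 2 * ⟪y, v⟫| ≤ |(s + t) * ‖v‖ ^ 2| + |2 * ⟪y, v⟫| := abs_sub _ _
    _ = |s + t| * ‖v‖ ^ 2 + 2 * |⟪y, v⟫| := by
        rw [abs_mul, abs_mul, abs_two, abs_of_nonneg (sq_nonneg ‖v‖)]
    _ ≤ 2 * ‖v‖ ^ 2 + 2 * (‖y‖ * ‖v‖) := by gcongr; exact abs_real_inner_le_norm y v
    _ = 2 * (‖y‖ + ‖v‖) * ‖v‖ := by ring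

lemma abs_iInf_norm_sub_add_smul_sq_sub_le [Nonempty ι] (c c' : ι → E) {x : E} {R s t : ℝ}
    (hx : ‖x‖ ≤ R) (hs : |s| ≤ 1) (ht : |t| ≤ 1) :
    |(⨅ u, ‖x - (c u + s • c' u)‖ ^ 2) - ⨅ u, ‖x - (c u + t • c' u)‖ ^ 2|
      ≤ (∑ u, 2 * (R + ‖c u‖ + ‖c' u‖) * ‖c' u‖) * |s - t| := by
  refine abs_ciInf_sub_ciInf_le fun u => ?_
  have hxu : ‖x - c u‖ ≤ R + ‖c u‖ := (norm_sub_le _ _).trans (by linarith)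
  calc |‖x - (c u + s • c' u)‖ ^ 2 - ‖x - (c u + t • c' u)‖ ^ 2|
        = |‖x - c u - s • c' u‖ ^ 2 - ‖x - c u - t • c' u‖ ^ 2| := by simp only [sub_sub]
    _ ≤ 2 * (‖x - c u‖ + ‖c' u‖) * ‖c' u‖ * |s - t| := abs_norm_sub_smul_sq_sub_le _ _ hs ht
    _ ≤ 2 * (R + ‖c u‖ + ‖c' u‖) * ‖c' u‖ * |s - t| := by gcongr
    _ ≤ _ := by
      gcongr
      exact Finset.single_le_sum (f := fun u => 2 * (R + ‖c u‖ + ‖c' u‖) * ‖c' u‖)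
        (fun i _ => by have := (norm_nonneg x).trans hx; positivity) (Finset.mem_univ u)

lemma hasDerivAt_iInf_norm_sub_add_smul_sq (c c' : ι → E) {x : E} {j : ι}
    (hj : ∀ u ≠ j, ‖x - c j‖ < ‖x - c u‖) :
    HasDerivAt (fun h : ℝ => ⨅ u, ‖x - (c u + h • c' u)‖ ^ 2) (-2 * ⟪x - c j, c' j⟫) 0 := by
  have hline : HasDerivAt (fun h : ℝ => x - (c j + h • c' j)) (-c' j) 0 := by
    simpa using (((hasDerivAt_id (0 : ℝ)).smul_const (c' j)).const_add (c j)).const_sub x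
  have hmin : ∀ᶠ h in 𝓝 (0 : ℝ),
      ⨅ u, ‖x - (c u + h • c' u)‖ ^ 2 = ‖x - (c j + h • c' j)‖ ^ 2 :=
    eventually_ciInf_eq_of_forall_lt (fun u => by fun_prop) fun u hu => by
      simpa using pow_lt_pow_left₀ (hj u hu) (norm_nonneg _) two_ne_zero
  refine (hline.norm_sq.congr_of_eventuallyEq hmin).congr_deriv ?_
  simp [inner_neg_right]

end MovingCenters

lemma ae_norm_sub_ne_norm_sub {E : Type*} [NormedAddCommGroup E] [InnerProductSpace ℝ E]
    [FiniteDimensional ℝ E] [MeasurableSpace E] [BorelSpace E] (μ : Measure E)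
    [μ.IsAddHaarMeasure] {a b : E} (hab : a ≠ b) : ∀ᵐ x ∂μ, ‖x - a‖ ≠ ‖x - b‖ := by
  have hbisector : {x | ¬‖x - a‖ ≠ ‖x - b‖} = (AffineSubspace.perpBisector a b : Set E) := by
    ext x
    simp [AffineSubspace.mem_perpBisector_iff_dist_eq, dist_eq_norm]
  rw [ae_iff, hbisector]
  exact Measure.addHaar_affineSubspace μ _ (by simpa using hab)

lemma ae_pairwise_norm_sub_ne {E ι : Type*} [NormedAddCommGroup E] [InnerProductSpace ℝ E]
    [FiniteDimensional ℝ E] [MeasurableSpace E] [BorelSpace E] [Countable ι] (μ : Measure E)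
    [μ.IsAddHaarMeasure] {c : ι → E} (hc : Function.Injective c) :
    ∀ᵐ x ∂μ, Pairwise fun i j => ‖x - c i‖ ≠ ‖x - c j‖ := by
  have hpair : ∀ i j, ∀ᵐ x ∂μ, i ≠ j → ‖x - c i‖ ≠ ‖x - c j‖ := fun i j => by
    by_cases hij : i = j
    · simp [hij]
    · filter_upwards [ae_norm_sub_ne_norm_sub μ (hc.ne hij)] with x hx _ using hx
  simpa only [Pairwise, ae_all_iff] using hpair

lemma IsCompact.integrableOn_mul_of_bounded {X : Type*} [TopologicalSpace X] [T2Space X]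
    [MeasurableSpace X] [OpensMeasurableSpace X] {μ : Measure X} [IsFiniteMeasureOnCompacts μ]
    {K : Set X} (hK : IsCompact K) {f g : X → ℝ} (hf : ContinuousOn f K) (hg : Measurable g)
    {M : ℝ} (hM : ∀ x, |g x| ≤ M) : IntegrableOn (fun x => f x * g x) K μ :=
  (hf.integrableOn_compact hK).mul_bdd hg.aestronglyMeasurable (ae_of_all _ hM)

lemma integral_inner_sub_mul_eq_zero_of_centroid {d : ℕ} {μ : Measure (EuclideanSpace ℝ (Fin d))}
    {g : EuclideanSpace ℝ (Fin d) → ℝ} {a : EuclideanSpace ℝ (Fin d)} (v : EuclideanSpace ℝ (Fin d))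
    (hg : Integrable g μ) (hxg : ∀ ℓ, Integrable (fun x => x ℓ * g x) μ)
    (hcentroid : ∀ ℓ, a ℓ * ∫ x, g x ∂μ = ∫ x, x ℓ * g x ∂μ) :
    ∫ x, ⟪x - a, v⟫ * g x ∂μ = 0 := by
  have hexpand : ∀ x : EuclideanSpace ℝ (Fin d),
      ⟪x - a, v⟫ * g x = ∑ ℓ, v ℓ * (x ℓ * g x - a ℓ * g x) := fun x => by
    simp only [PiLp.inner_apply, PiLp.sub_apply, RCLike.inner_apply, conj_trivial, Finset.sum_mul]
    exact Finset.sum_congr rfl fun ℓ _ => by ring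
  simp_rw [hexpand]
  rw [integral_finsetSum]
  · refine Finset.sum_eq_zero fun ℓ _ => ?_
    rw [integral_const_mul, integral_sub (hxg ℓ) (hg.const_mul _), integral_const_mul,
      hcentroid ℓ, sub_self, mul_zero]
  · exact fun ℓ _ => ((hxg ℓ).sub (hg.const_mul (a ℓ))).const_mul (v ℓ)

section Voronoi

variable {d k : ℕ}

lemma isClosed_voronoiCell (c : Fin k → EuclideanSpace ℝ (Fin d)) (j : Fin k) :
    IsClosed (voronoiCell c j) := by
  simp only [voronoiCell, ofPred_forall]
  exact isClosed_iInter fun u => isClosed_le (by fun_prop) (by fun_prop)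

lemma exists_mem_voronoiCell [Nonempty (Fin k)] (c : Fin k → EuclideanSpace ℝ (Fin d))
    (x : EuclideanSpace ℝ (Fin d)) : ∃ j, x ∈ voronoiCell c j :=
  Finite.exists_min fun j => ‖x - c j‖

lemma hasDerivAt_iInf_norm_sub_add_smul_sq_of_pairwise_ne [Nonempty (Fin k)]
    (c c' : Fin k → EuclideanSpace ℝ (Fin d)) {x : EuclideanSpace ℝ (Fin d)}
    (hx : Pairwise fun i j => ‖x - c i‖ ≠ ‖x - c j‖) :
    HasDerivAt (fun h : ℝ => ⨅ u, ‖x - (c u + h • c' u)‖ ^ 2)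
      (∑ u, (voronoiCell c u).indicator (fun y => -2 * ⟪y - c u, c' u⟫) x) 0 := by
  obtain ⟨j, hj⟩ := exists_mem_voronoiCell c x
  have hlt : ∀ u ≠ j, ‖x - c j‖ < ‖x - c u‖ := fun u hu => (hj u).lt_of_ne (hx hu.symm)
  have hnot : ∀ u ≠ j, x ∉ voronoiCell c u := fun u hu hxu => (hxu j).not_gt (hlt u hu)
  rw [Finset.sum_eq_single j (fun u _ hu => indicator_of_notMem (hnot u hu) _) (by simp),
    indicator_of_mem hj]
  exact hasDerivAt_iInf_norm_sub_add_smul_sq c c' hlt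

lemma integral_sum_indicator_voronoiCell_mul_eq_zero {K : Set (EuclideanSpace ℝ (Fin d))}
    (hK : IsCompact K) {g : EuclideanSpace ℝ (Fin d) → ℝ} (hg : Measurable g) {M : ℝ}
    (hM : ∀ x, |g x| ≤ M) {c : Fin k → EuclideanSpace ℝ (Fin d)}
    (c' : Fin k → EuclideanSpace ℝ (Fin d))
    (hcentroid : ∀ j ℓ, c j ℓ * ∫ x in voronoiCell c j ∩ K, g x =
      ∫ x in voronoiCell c j ∩ K, x ℓ * g x) :
    ∫ x in K, (∑ u, (voronoiCell c u).indicator (fun y => -2 * ⟪y - c u, c' u⟫) x) * g x = 0 := by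
  have hcell : ∀ u, MeasurableSet (voronoiCell c u) := fun u =>
    (isClosed_voronoiCell c u).measurableSet
  have hint : ∀ {f : EuclideanSpace ℝ (Fin d) → ℝ}, Continuous f →
      IntegrableOn (fun x => f x * g x) K := fun hf =>
    hK.integrableOn_mul_of_bounded hf.continuousOn hg hM
  have hg_int : IntegrableOn g K := by simpa using hint (f := fun _ => 1) continuous_const
  simp_rw [Finset.sum_mul, ← indicator_mul_left]
  rw [integral_finsetSum _ fun u _ => (hint (by fun_prop)).indicator (hcell u)]
  refine Finset.sum_eq_zero fun u _ => ?_
  rw [integral_indicator (hcell u), Measure.restrict_restrict (hcell u)]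
  simp_rw [mul_assoc]
  rw [integral_const_mul, integral_inner_sub_mul_eq_zero_of_centroid (c' u)
    (hg_int.mono_set inter_subset_right)
    (fun ℓ => (hint (by fun_prop)).mono_set inter_subset_right) (hcentroid u), mul_zero]

end Voronoi

lemma hasDerivAt_integral_iInf_norm_sub_add_smul_sq_mul {d k : ℕ} [Nonempty (Fin k)]
    {K : Set (EuclideanSpace ℝ (Fin d))} (hK : IsCompact K) {g : EuclideanSpace ℝ (Fin d) → ℝ}
    (hg : Measurable g) {M : ℝ} (hM : ∀ x, |g x| ≤ M) {c : Fin k → EuclideanSpace ℝ (Fin d)}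
    (hc : Function.Injective c) (c' : Fin k → EuclideanSpace ℝ (Fin d)) :
    HasDerivAt (fun h : ℝ => ∫ x in K, (⨅ u, ‖x - (c u + h • c' u)‖ ^ 2) * g x)
      (∫ x in K, (∑ u, (voronoiCell c u).indicator (fun y => -2 * ⟪y - c u, c' u⟫) x) * g x)
      0 := by
  obtain ⟨R, hR0, hR⟩ := hK.isBounded.exists_pos_norm_le
  set C := ∑ u, 2 * (R + ‖c u‖ + ‖c' u‖) * ‖c' u‖
  have hC : 0 ≤ C := Finset.sum_nonneg fun u _ => by positivity
  have hM0 : 0 ≤ M := (abs_nonneg _).trans (hM 0)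
  have hcont : ∀ h : ℝ, Continuous fun x => ⨅ u, ‖x - (c u + h • c' u)‖ ^ 2 := fun h =>
    Continuous.ciInf_apply fun u => by fun_prop
  refine (hasDerivAt_integral_of_dominated_loc_of_lip (Metric.ball_mem_nhds 0 one_pos)
    (bound := fun _ => C * M) ?_ ?_ ?_ ?_ (integrableOn_const hK.measure_lt_top.ne) ?_).2
  · exact Eventually.of_forall fun h => ((hcont h).measurable.mul hg).aestronglyMeasurable
  · exact hK.integrableOn_mul_of_bounded (hcont 0).continuousOn hg hM
  · refine ((Finset.measurable_sum _ fun u _ => ?_).mul hg).aestronglyMeasurable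
    exact (Continuous.measurable (by fun_prop)).indicator (isClosed_voronoiCell c u).measurableSet
  · filter_upwards [ae_restrict_mem hK.measurableSet] with x hx
    refine LipschitzOnWith.of_dist_le_mul fun s hs t ht => ?_
    rw [Metric.mem_ball, Real.dist_0_eq_abs] at hs ht
    rw [Real.dist_eq, Real.dist_eq, ← sub_mul, abs_mul, Real.coe_nnabs,
      abs_of_nonneg (mul_nonneg hC hM0)]
    calc _ ≤ C * |s - t| * M :=
          mul_le_mul (abs_iInf_norm_sub_add_smul_sq_sub_le c c' (hR x hx) hs.le ht.le) (hM x)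
            (abs_nonneg _) (by positivity)
      _ = C * M * |s - t| := by ring
  · filter_upwards [ae_restrict_of_ae (ae_pairwise_norm_sub_ne volume hc)] with x hx
    exact (hasDerivAt_iInf_norm_sub_add_smul_sq_of_pairwise_ne c c' hx).mul_const (g x)

theorem directional_derivatives_vanish_of_first_order_conditions_general
    (d k : ℕ) (hk : 1 ≤ k)
    (K : Set (EuclideanSpace ℝ (Fin d))) (hK : IsCompact K)
    (g : EuclideanSpace ℝ (Fin d) → ℝ)
    (hg_bdd : ∃ M : ℝ, ∀ x, |g x| ≤ M) (hg_meas : Measurable g)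
    (W : (Fin k → EuclideanSpace ℝ (Fin d)) → ℝ)
    (hW : W = fun c => ∫ x in K, (⨅ j : Fin k, ‖x - c j‖ ^ 2) * g x)
    (c : Fin k → EuclideanSpace ℝ (Fin d))
    (hc : Function.Injective c)
    (hfoc : ∀ (j : Fin k) (ℓ : Fin d),
      c j ℓ * ∫ x in voronoiCell c j ∩ K, g x =
        ∫ x in voronoiCell c j ∩ K, x ℓ * g x) :
    ∀ c' : Fin k → EuclideanSpace ℝ (Fin d),
      Filter.Tendsto (fun h : ℝ => (W (c + h • c') - W c) / h)
        (nhdsWithin 0 {0}ᶜ) (nhds 0) := by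
  intro c'
  obtain ⟨M, hM⟩ := hg_bdd
  have : Nonempty (Fin k) := ⟨⟨0, hk⟩⟩
  have hderiv := hasDerivAt_integral_iInf_norm_sub_add_smul_sq_mul hK hg_meas hM hc c'
  rw [integral_sum_indicator_voronoiCell_mul_eq_zero hK hg_meas hM c' hfoc] at hderiv
  subst hW
  simpa [div_eq_inv_mul] using hasDerivAt_iff_tendsto_slope_zero.1 hderiv

/-- If `g` is bounded and measurable on a compact `K ⊆ ℝ^d`, the codebook `c`
has pairwise distinct centers and satisfies the first-order (centroid) conditions on each
Voronoi cell, then every directional derivative of the weighted distortion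
`W_g(c) = ∫_K min_j ‖x − c_j‖² g(x) dx` at `c` is zero. -/
theorem directional_derivatives_vanish_of_first_order_conditions
    (d k : ℕ) (hd : 1 ≤ d) (hk : 1 ≤ k)
    (K : Set (EuclideanSpace ℝ (Fin d))) (hK : IsCompact K)
    (g : EuclideanSpace ℝ (Fin d) → ℝ)
    (hg_bdd : ∃ M : ℝ, ∀ x, |g x| ≤ M) (hg_meas : Measurable g)
    (W : (Fin k → EuclideanSpace ℝ (Fin d)) → ℝ)
    (hW : W = fun c => ∫ x in K, (⨅ j : Fin k, ‖x - c j‖ ^ 2) * g x)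
    (c : Fin k → EuclideanSpace ℝ (Fin d))
    (hc : Function.Injective c)
    (hfoc : ∀ (j : Fin k) (ℓ : Fin d),
      c j ℓ * ∫ x in voronoiCell c j ∩ K, g x =
        ∫ x in voronoiCell c j ∩ K, x ℓ * g x) :
    ∀ c' : Fin k → EuclideanSpace ℝ (Fin d),
      Filter.Tendsto (fun h : ℝ => (W (c + h • c') - W c) / h)
        (nhdsWithin 0 {0}ᶜ) (nhds 0) :=
  directional_derivatives_vanish_of_first_order_conditions_general d k hk K hK g hg_bdd hg_meas W hW
    c hc hfoc
end

section
/- Let d, k ≥ 1, let K ⊆ ℝ^d be compact, and let g : ℝ^d → ℝ be integrable on K. Then the map c ↦ W_g(c) = ∫_K min_{j=1,…,k} ‖x − c_j‖² g(x) dx is continuous on (ℝ^d)^k, and is Lipschitz on every bounded subset of (ℝ^d)^k. -/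
/-!
If `K ⊆ closedBall 0 R` and all centres lie in `closedBall 0 M`, then for `x ∈ K` each map
`c ↦ ‖x - c j‖²` is `2 (R + M)`-Lipschitz, and a minimum of finitely many `L`-Lipschitz functions is
`L`-Lipschitz. Integrating against `|g|` shows that `W` is Lipschitz on `closedBall 0 M` with
constant `2 (R + M) ∫_K |g|`. Every bounded set lies in such a ball and every point has one as a
neighbourhood, so `W` is locally Lipschitz, hence continuous.
-/

open MeasureTheory Metric Set
open scoped NNReal

theorem LipschitzOnWith.ciInf {ι X : Type*} [Finite ι] [Nonempty ι] [PseudoMetricSpace X]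
    {f : ι → X → ℝ} {s : Set X} {L : ℝ≥0} (hf : ∀ i, LipschitzOnWith L (f i) s) :
    LipschitzOnWith L (fun x => ⨅ i, f i x) s := by
  refine LipschitzOnWith.of_le_add_mul L fun x hx y hy => ?_
  obtain ⟨i, hi⟩ := exists_eq_ciInf_of_finite (f := fun i => f i y)
  calc ⨅ i, f i x ≤ f i x := ciInf_le (Finite.bddBelow_range _) i
    _ ≤ f i y + L * dist x y := (hf i).le_add_mul hx hy
    _ = (⨅ i, f i y) + L * dist x y := by rw [hi]

theorem lipschitzOnWith_sq_norm_closedBall {E : Type*} [SeminormedAddCommGroup E] (r : ℝ≥0) :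
    LipschitzOnWith (2 * r) (fun y : E => ‖y‖ ^ 2) (closedBall 0 r) := by
  refine LipschitzOnWith.of_dist_le_mul fun y hy z hz => ?_
  rw [mem_closedBall_zero_iff] at hy hz
  calc dist (‖y‖ ^ 2) (‖z‖ ^ 2) = (‖y‖ + ‖z‖) * |‖y‖ - ‖z‖| := by
        rw [Real.dist_eq, show ‖y‖ ^ 2 - ‖z‖ ^ 2 = (‖y‖ + ‖z‖) * (‖y‖ - ‖z‖) by ring, abs_mul,
          abs_of_nonneg (by positivity)]
    _ ≤ (r + r) * dist y z := by
        gcongr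
        rw [dist_eq_norm]; exact abs_norm_sub_norm_le y z
    _ = ↑(2 * r) * dist y z := by push_cast; ring

theorem lipschitzOnWith_sq_norm_sub_closedBall {E : Type*} [SeminormedAddCommGroup E]
    {x : E} {R : ℝ≥0} (hx : ‖x‖ ≤ R) (M : ℝ≥0) :
    LipschitzOnWith (2 * (R + M)) (fun t : E => ‖x - t‖ ^ 2) (closedBall 0 M) := by
  have hmaps : MapsTo (x - ·) (closedBall (0 : E) M) (closedBall 0 (R + M)) := fun t ht => by
    rw [mem_closedBall_zero_iff] at ht ⊢
    exact (norm_sub_le x t).trans (by gcongr)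
  have h := (lipschitzOnWith_sq_norm_closedBall (R + M)).comp
    (Isometry.of_dist_eq fun a b => dist_sub_left x a b).lipschitz.lipschitzOnWith hmaps
  rwa [mul_one] at h

theorem lipschitzOnWith_iInf_sq_norm_sub {ι E : Type*} [Fintype ι] [Nonempty ι]
    [SeminormedAddCommGroup E] {x : E} {R : ℝ≥0} (hx : ‖x‖ ≤ R) (M : ℝ≥0) :
    LipschitzOnWith (2 * (R + M)) (fun c : ι → E => ⨅ j, ‖x - c j‖ ^ 2) (closedBall 0 M) :=
  LipschitzOnWith.ciInf fun j => by
    have h := (lipschitzOnWith_sq_norm_sub_closedBall hx M).comp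
      (LipschitzWith.eval (α := fun _ : ι => E) j).lipschitzOnWith fun c hc =>
        mem_closedBall_zero_iff.2 ((norm_le_pi_norm c j).trans (mem_closedBall_zero_iff.1 hc))
    rwa [mul_one] at h

theorem lipschitzOnWith_integral_mul {X α : Type*} [PseudoMetricSpace X] [MeasurableSpace α]
    {μ : Measure α} {F : X → α → ℝ} {g : α → ℝ} {s : Set X} {L : ℝ≥0}
    (hg : Integrable g μ) (hFg : ∀ c ∈ s, Integrable (fun x => F c x * g x) μ)
    (hF : ∀ᵐ x ∂μ, LipschitzOnWith L (F · x) s) :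
    LipschitzOnWith (L * (∫ x, ‖g x‖ ∂μ).toNNReal) (fun c => ∫ x, F c x * g x ∂μ) s := by
  refine LipschitzOnWith.of_dist_le_mul fun c hc c' hc' => ?_
  rw [dist_eq_norm, ← integral_sub (hFg c hc) (hFg c' hc'), NNReal.coe_mul,
    Real.coe_toNNReal _ (integral_nonneg fun _ => norm_nonneg _), mul_right_comm,
    ← integral_const_mul]
  refine norm_integral_le_of_norm_le (hg.norm.const_mul _) ?_
  filter_upwards [hF] with x hx
  rw [← sub_mul, norm_mul, Real.norm_eq_abs, ← Real.dist_eq, mul_comm (L : ℝ)]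
  exact mul_le_mul_of_nonneg_right ((hx.dist_le_mul c hc c' hc').trans_eq (mul_comm _ _))
    (norm_nonneg _)

theorem continuous_ciInf_of_finite {ι X α : Type*} [Fintype ι] [Nonempty ι] [TopologicalSpace X]
    [ConditionallyCompleteLinearOrder α] [TopologicalSpace α] [OrderClosedTopology α]
    {f : ι → X → α} (hf : ∀ i, Continuous (f i)) : Continuous fun x => ⨅ i, f i x := by
  simp only [← Finset.inf'_univ_eq_ciInf]
  exact Continuous.finset_inf'_apply _ fun i _ => hf i

theorem Bornology.IsBounded.exists_subset_closedBall_zero {E : Type*} [SeminormedAddCommGroup E]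
    {s : Set E} (hs : Bornology.IsBounded s) : ∃ r : ℝ≥0, s ⊆ closedBall 0 r := by
  obtain ⟨r, hr⟩ := hs.subset_closedBall 0
  exact ⟨r.toNNReal, hr.trans (closedBall_subset_closedBall (Real.le_coe_toNNReal r))⟩

theorem distortion_continuous_and_locally_lipschitz_general
    (d k : ℕ) (hk : 1 ≤ k)
    (K : Set (EuclideanSpace ℝ (Fin d))) (hK : IsCompact K)
    (g : EuclideanSpace ℝ (Fin d) → ℝ) (hg : IntegrableOn g K)
    (W : (Fin k → EuclideanSpace ℝ (Fin d)) → ℝ)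
    (hW : W = fun c => ∫ x in K, (⨅ j : Fin k, ‖x - c j‖ ^ 2) * g x) :
    Continuous W ∧
    ∀ s : Set (Fin k → EuclideanSpace ℝ (Fin d)), Bornology.IsBounded s →
      ∃ L : NNReal, LipschitzOnWith L W s := by
  have : Nonempty (Fin k) := ⟨⟨0, hk⟩⟩
  obtain ⟨R, hKR⟩ := hK.isBounded.exists_subset_closedBall_zero
  have hLip (M : ℝ≥0) : ∃ L, LipschitzOnWith L W (closedBall 0 M) := by
    refine ⟨_, hW ▸ lipschitzOnWith_integral_mul (L := 2 * (R + M)) hg (fun c _ => ?_) ?_⟩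
    · exact IntegrableOn.continuousOn_mul
        (continuous_ciInf_of_finite fun j => by fun_prop).continuousOn hg hK
    · exact ae_restrict_of_forall_mem hK.measurableSet fun x hx =>
        lipschitzOnWith_iInf_sq_norm_sub (mem_closedBall_zero_iff.1 (hKR hx)) M
  refine ⟨LocallyLipschitz.continuous fun c => ?_, fun s hs => ?_⟩
  · obtain ⟨L, hL⟩ := hLip (‖c‖₊ + 1)
    refine ⟨L, closedBall 0 (‖c‖₊ + 1), closedBall_mem_nhds_of_mem ?_, hL⟩
    simp
  · obtain ⟨M, hsM⟩ := hs.exists_subset_closedBall_zero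
    obtain ⟨L, hL⟩ := hLip M
    exact ⟨L, hL.mono hsM⟩

/-- For `g` integrable on a compact `K ⊆ ℝ^d`, the weighted distortion
`c ↦ W_g(c) = ∫_K min_j ‖x − c_j‖² g(x) dx` is continuous on `(ℝ^d)^k` and Lipschitz on
every bounded subset of `(ℝ^d)^k`. -/
theorem distortion_continuous_and_locally_lipschitz
    (d k : ℕ) (hd : 1 ≤ d) (hk : 1 ≤ k)
    (K : Set (EuclideanSpace ℝ (Fin d))) (hK : IsCompact K)
    (g : EuclideanSpace ℝ (Fin d) → ℝ) (hg : IntegrableOn g K)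
    (W : (Fin k → EuclideanSpace ℝ (Fin d)) → ℝ)
    (hW : W = fun c => ∫ x in K, (⨅ j : Fin k, ‖x - c j‖ ^ 2) * g x) :
    Continuous W ∧
    ∀ s : Set (Fin k → EuclideanSpace ℝ (Fin d)), Bornology.IsBounded s →
      ∃ L : NNReal, LipschitzOnWith L W s :=
  distortion_continuous_and_locally_lipschitz_general d k hk K hK g hg W hW
end
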